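/- Fix real numbers s, q with q > 2 − s, and let (λ_j) be a positive increasing sequence with λ_j ~ j^{2/d} (eigenvalues of the Dirichlet negative Laplacian). Given coefficients (ξ_j) with Σ_j ξ_j² λ_j^{−s} < ∞, for γ > 0 define u_γ with coefficients (u_γ)_j = ξ_j / (λ_j (1 + γ λ_j^{q+s−2})) and u_0 with coefficients ξ_j / λ_j. Then for every α ≤ 2 − s: Σ_j (u_γ)_j² λ_j^α < ∞ for each γ > 0, and Σ_j ((u_γ)_j − (u_0)_j)² λ_j^α → 0 as γ → 0. -/
import Mathlib


open Filter Topology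

/-- convergence rates for the regularized Poisson problem.
With eigenvalues `λ_j ~ j^{2/d}` (here indexed so that `lam j` plays the role of
`λ_{j+1}`), `ξ ∈ H^{-s}` and `q > 2 - s`, the regularized coefficients
`(u_γ)_j = ξ_j/(λ_j (1 + γ λ_j^{q+s-2}))` define an element of `H^α` for every
`γ > 0` and every `α ≤ 2 - s`, and `‖u_γ - u_0‖²_{H^α} → 0` as `γ → 0⁺`. -/
theorem statement8
    (s q : ℝ) (hq : q > 2 - s)
    (d : ℕ) (hd : 0 < d)
    (lam : ℕ → ℝ) (hpos : ∀ j, 0 < lam j) (hmono : Monotone lam)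
    (hgrowth : ∃ c C : ℝ, 0 < c ∧ 0 < C ∧ ∀ j : ℕ,
      c * ((j : ℝ) + 1) ^ ((2 : ℝ) / d) ≤ lam j ∧
      lam j ≤ C * ((j : ℝ) + 1) ^ ((2 : ℝ) / d))
    (ξ : ℕ → ℝ) (hξ : Summable (fun j => ξ j ^ 2 * lam j ^ (-s))) :
    ∀ α : ℝ, α ≤ 2 - s →
      (∀ γ : ℝ, 0 < γ →
        Summable (fun j => (ξ j / (lam j * (1 + γ * lam j ^ (q + s - 2)))) ^ 2
          * lam j ^ α)) ∧
      Tendsto (fun γ : ℝ => ∑' j,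
          (ξ j / (lam j * (1 + γ * lam j ^ (q + s - 2))) - ξ j / lam j) ^ 2
            * lam j ^ α)
        (𝓝[>] 0) (𝓝 0) := by
  intro α hα
  set e : ℝ := q + s - 2 with he
  set K : ℝ := (lam 0) ^ (α + s - 2) with hK
  have hKpos : 0 < K := Real.rpow_pos_of_pos (hpos 0) _
  have hg : Summable (fun j => K * (ξ j ^ 2 * lam j ^ (-s))) := hξ.mul_left K
  -- key pointwise estimate
  have hfac : ∀ j, lam j ^ α / lam j ^ 2 ≤ K * lam j ^ (-s) := by
    intro j
    have hL := hpos j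
    have h1 : lam j ^ (2 : ℕ) = lam j ^ ((2 : ℕ) : ℝ) := (Real.rpow_natCast _ 2).symm
    rw [h1]
    push_cast
    rw [← Real.rpow_sub hL]
    have h2 : lam j ^ (α - 2) = lam j ^ (α + s - 2) * lam j ^ (-s) := by
      rw [← Real.rpow_add hL]; ring_nf
    rw [h2]
    have h3 : lam j ^ (α + s - 2) ≤ K :=
      Real.rpow_le_rpow_of_nonpos (hpos 0) (hmono (Nat.zero_le j)) (by linarith)
    exact mul_le_mul_of_nonneg_right h3 (Real.rpow_pos_of_pos hL _).le
  have hratio : ∀ (x : ℝ) (j : ℕ) (γ : ℝ), 0 ≤ γ →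
      (x / (lam j * (1 + γ * lam j ^ e)))^2 ≤ (x / lam j)^2 := by
    intro x j γ hγ
    have hL := hpos j
    have ht : (0:ℝ) ≤ γ * lam j ^ e := mul_nonneg hγ (Real.rpow_pos_of_pos hL _).le
    have hden : lam j ≤ lam j * (1 + γ * lam j ^ e) := by nlinarith
    have hden0 : 0 < lam j * (1 + γ * lam j ^ e) := by nlinarith
    rw [div_pow, div_pow]
    apply div_le_div_of_nonneg_left (sq_nonneg x) (by positivity)
    nlinarith
  -- bound for the regularized coefficients
  have hbound1 : ∀ (γ : ℝ), 0 ≤ γ → ∀ j,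
      (ξ j / (lam j * (1 + γ * lam j ^ e))) ^ 2 * lam j ^ α
        ≤ K * (ξ j ^ 2 * lam j ^ (-s)) := by
    intro γ hγ j
    have hL := hpos j
    have h1 : (ξ j / (lam j * (1 + γ * lam j ^ e))) ^ 2 * lam j ^ α
        ≤ (ξ j / lam j)^2 * lam j ^ α :=
      mul_le_mul_of_nonneg_right (hratio _ j γ hγ) (Real.rpow_pos_of_pos hL _).le
    refine h1.trans ?_
    rw [div_pow]
    rw [div_mul_eq_mul_div, div_le_iff₀ (by positivity)] at *
    calc ξ j ^ 2 * lam j ^ α = ξ j ^ 2 * (lam j ^ α / lam j ^ 2) * lam j ^ 2 := by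
          field_simp
      _ ≤ ξ j ^ 2 * (K * lam j ^ (-s)) * lam j ^ 2 := by
          gcongr
          exact hfac j
      _ = K * (ξ j ^ 2 * lam j ^ (-s)) * lam j ^ 2 := by ring
  -- bound for the difference
  have hbound2 : ∀ (γ : ℝ), 0 ≤ γ → ∀ j,
      (ξ j / (lam j * (1 + γ * lam j ^ e)) - ξ j / lam j) ^ 2 * lam j ^ α
        ≤ 4 * (K * (ξ j ^ 2 * lam j ^ (-s))) := by
    intro γ hγ j
    have hL := hpos j
    have h1 := hratio (ξ j) j γ hγ
    have h2 : (ξ j / (lam j * (1 + γ * lam j ^ e)) - ξ j / lam j) ^ 2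
        ≤ 4 * (ξ j / lam j)^2 := by nlinarith
    have h3 : (ξ j / (lam j * (1 + γ * lam j ^ e)) - ξ j / lam j) ^ 2 * lam j ^ α
        ≤ 4 * ((ξ j / lam j)^2 * lam j ^ α) := by
      have := mul_le_mul_of_nonneg_right h2 (Real.rpow_pos_of_pos hL α).le
      linarith [this]
    refine h3.trans ?_
    have h4 : (ξ j / lam j)^2 * lam j ^ α ≤ K * (ξ j ^ 2 * lam j ^ (-s)) := by
      rw [div_pow, div_mul_eq_mul_div, div_le_iff₀ (by positivity)]
      calc ξ j ^ 2 * lam j ^ α = ξ j ^ 2 * (lam j ^ α / lam j ^ 2) * lam j ^ 2 := by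
            field_simp
        _ ≤ ξ j ^ 2 * (K * lam j ^ (-s)) * lam j ^ 2 := by
            gcongr
            exact hfac j
        _ = K * (ξ j ^ 2 * lam j ^ (-s)) * lam j ^ 2 := by ring
    linarith
  constructor
  · intro γ hγ
    apply Summable.of_nonneg_of_le (fun j => by have := hpos j; positivity)
      (hbound1 γ hγ.le) hg
  · have H : Tendsto (fun γ : ℝ => ∑' j,
          (ξ j / (lam j * (1 + γ * lam j ^ e)) - ξ j / lam j) ^ 2 * lam j ^ α)
        (𝓝[>] (0:ℝ)) (𝓝 (∑' _ : ℕ, (0:ℝ))) := by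
      apply tendsto_tsum_of_dominated_convergence (hg.mul_left 4)
      · intro j
        have hL := hpos j
        have hcont : ContinuousAt (fun γ : ℝ =>
            (ξ j / (lam j * (1 + γ * lam j ^ e)) - ξ j / lam j) ^ 2 * lam j ^ α) 0 := by
          have hne : lam j * (1 + (0:ℝ) * lam j ^ e) ≠ 0 := by
            simpa using hL.ne'
          fun_prop (disch := simpa using hne)
        have hval : (ξ j / (lam j * (1 + (0:ℝ) * lam j ^ e)) - ξ j / lam j) ^ 2
            * lam j ^ α = 0 := by simp
        have := hcont.tendsto.mono_left (nhdsWithin_le_nhds (s := Set.Ioi (0:ℝ)))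
        rwa [hval] at this
      · filter_upwards [self_mem_nhdsWithin] with γ (hγ : 0 < γ) j
        have hL := hpos j
        rw [Real.norm_eq_abs, abs_of_nonneg (by positivity)]
        simpa [mul_comm] using hbound2 γ hγ.le j
    simpa using H
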